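/- Suppose the principal curvatures of a hypersurface M_t evolving by mean curvature flow satisfy λᵢ ≥ −B with B ≥ 0, and let Ĥ = H + nB ≥ 0, where H evolves by ∂ₜH = ΔH + |A|²H. Then ∂ₜĤ ≤ ΔĤ + Ĥ³ + nB²Ĥ. -/
import Mathlib


theorem shifted_mean_curvature_evolution (n : ℕ) (B : ℝ) (hB : 0 ≤ B)
    {M : Type*} (lam : Fin n → M → ℝ → ℝ) (H lap A2 : M → ℝ → ℝ)
    (hA2 : ∀ p t, A2 p t = ∑ i, (lam i p t) ^ 2)
    (hH : ∀ p t, H p t = ∑ i, lam i p t)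
    (hlam : ∀ i p t, -B ≤ lam i p t)
    (hevol : ∀ p t, HasDerivAt (H p) (lap p t + A2 p t * H p t) t) :
    ∀ p t, HasDerivAt (fun s => H p s + n * B) (lap p t + A2 p t * H p t) t ∧
      lap p t + A2 p t * H p t ≤
        lap p t + (H p t + n * B) ^ 3 + n * B ^ 2 * (H p t + n * B) := by
  intro p t
  constructor
  · exact (hevol p t).add_const _
  · set mu : Fin n → ℝ := fun i => lam i p t + B with hmu
    have hmunn : ∀ i, 0 ≤ mu i := fun i => by
      have := hlam i p t; simp [hmu]; linarith
    have hHhat : H p t + n * B = ∑ i, mu i := by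
      simp [hH, hmu, Finset.sum_add_distrib, mul_comm]
    have hhatnn : 0 ≤ H p t + n * B := by
      rw [hHhat]; exact Finset.sum_nonneg fun i _ => hmunn i
    have hsumsq : ∑ i, (mu i) ^ 2 ≤ (∑ i, mu i) ^ 2 := by
      rw [sq (∑ i, mu i), Finset.mul_sum]
      apply Finset.sum_le_sum
      intro i _
      rw [sq]
      exact mul_le_mul_of_nonneg_right
        (Finset.single_le_sum (fun j _ => hmunn j) (Finset.mem_univ i)) (hmunn i)
    have hQ : A2 p t ≤ (H p t + n * B) ^ 2 - 2 * B * (H p t + n * B) + n * B ^ 2 := by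
      have hA2eq : A2 p t = ∑ i, (mu i) ^ 2 - 2 * B * (∑ i, mu i) + n * B ^ 2 := by
        rw [hA2]
        have : ∀ i : Fin n, (lam i p t) ^ 2 = (mu i) ^ 2 - 2 * B * mu i + B ^ 2 := by
          intro i; simp [hmu]; ring
        simp only [this, Finset.sum_add_distrib, Finset.sum_sub_distrib,
          Finset.mul_sum, Finset.sum_const, Finset.card_univ, Fintype.card_fin,
          nsmul_eq_mul]
      rw [hA2eq, hHhat]
      nlinarith [hsumsq]
    have hA2nn : 0 ≤ A2 p t := by
      rw [hA2]; exact Finset.sum_nonneg fun i _ => sq_nonneg _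
    rcases le_or_gt 0 (H p t) with hpos | hneg
    · have key := mul_le_mul_of_nonneg_right hQ hpos
      nlinarith [sq_nonneg (H p t + n * B - B), Nat.cast_nonneg (α := ℝ) n,
        mul_nonneg (mul_nonneg (Nat.cast_nonneg (α := ℝ) n) hB) hB,
        mul_nonneg hB (sq_nonneg (H p t + n * B - B)),
        mul_nonneg (mul_nonneg (mul_nonneg (Nat.cast_nonneg (α := ℝ) n) hB) hB) hB,
        mul_nonneg hB (sq_nonneg (H p t + n * B))]
    · have h1 : A2 p t * H p t ≤ 0 := mul_nonpos_of_nonneg_of_nonpos hA2nn hneg.le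
      have h2 : 0 ≤ (H p t + n * B) ^ 3 + n * B ^ 2 * (H p t + n * B) := by
        have := pow_nonneg hhatnn 3
        have := mul_nonneg (mul_nonneg (Nat.cast_nonneg (α := ℝ) n) (sq_nonneg B)) hhatnn
        linarith
      linarith
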